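/- Let 𝒜 and ℬ be graded algebras over ℂ, and let θ1 : 𝒜1 → ℬ1 and θ2 : 𝒜2 → ℬ2 be linear maps such that θ2(xy) = θ1(x)θ1(y) for all x, y ∈ 𝒜1. Assume 𝒜 satisfies condition (5.2) and condition (5.3). Then there exist unique linear maps θ_t : 𝒜_t → ℬ_t for t = 3, 4, … such that θ = (θ1, θ2, θ3, …) is a morphism of graded algebras, i.e. θ_{s+t}(xy) = θ_s(x)θ_t(y) for all x ∈ 𝒜_s, y ∈ 𝒜_t and all s, t ∈ {1,2,3,…}. -/
import Mathlib


open TensorProduct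

section Graded

variable (A : ℕ → Type*) [∀ t, AddCommGroup (A t)] [∀ t, Module ℂ (A t)]
variable (mul : ∀ s t : ℕ, A s →ₗ[ℂ] A t →ₗ[ℂ] A (s + t))

/-- The multiplication map `M_{s,t} : 𝒜_s ⊗ 𝒜_t → 𝒜_{s+t}`. -/
noncomputable def M2 (s t : ℕ) : (A s ⊗[ℂ] A t) →ₗ[ℂ] A (s + t) :=
  TensorProduct.lift (mul s t)

/-- The multiplication map `M_{r,s,t} : (𝒜_r ⊗ 𝒜_s) ⊗ 𝒜_t → 𝒜_{r+s+t}`. -/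
noncomputable def M3 (r s t : ℕ) : ((A r ⊗[ℂ] A s) ⊗[ℂ] A t) →ₗ[ℂ] A (r + s + t) :=
  (M2 A mul (r + s) t).comp (TensorProduct.map (M2 A mul r s) LinearMap.id)

/-- Associativity of the graded multiplication. -/
def GradedAssoc : Prop :=
  ∀ (r s t : ℕ) (x : A r) (y : A s) (z : A t),
    HEq (mul (r + s) t (mul r s x y) z) (mul r (s + t) x (mul s t y z))

/-- Condition (5.2): `Ker M_{r,s,t} = (Ker M_{r,s}) ⊗ 𝒜_t + 𝒜_r ⊗ (Ker M_{s,t})`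
for all positive `r`, `s`, `t`. -/
def Cond52 : Prop :=
  ∀ r s t : ℕ, 1 ≤ r → 1 ≤ s → 1 ≤ t →
    LinearMap.ker (M3 A mul r s t) =
      LinearMap.range (TensorProduct.mapIncl (LinearMap.ker (M2 A mul r s))
          (⊤ : Submodule ℂ (A t))) ⊔
        Submodule.map (TensorProduct.assoc ℂ (A r) (A s) (A t)).symm.toLinearMap
          (LinearMap.range (TensorProduct.mapIncl (⊤ : Submodule ℂ (A r))
            (LinearMap.ker (M2 A mul s t))))

/-- Condition (5.3): `M_{s,t}` is surjective for all positive `s`, `t`. -/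
def Cond53 : Prop :=
  ∀ s t : ℕ, 1 ≤ s → 1 ≤ t → Function.Surjective (M2 A mul s t)


end Graded

section Aux

variable {A : ℕ → Type*} [∀ t, AddCommGroup (A t)] [∀ t, Module ℂ (A t)]
variable (mulA : ∀ s t : ℕ, A s →ₗ[ℂ] A t →ₗ[ℂ] A (s + t))
variable {B : ℕ → Type*} [∀ t, AddCommGroup (B t)] [∀ t, Module ℂ (B t)]
variable (mulB : ∀ s t : ℕ, B s →ₗ[ℂ] B t →ₗ[ℂ] B (s + t))
variable (f1 : A 1 →ₗ[ℂ] B 1) (f2 : A 2 →ₗ[ℂ] B 2)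

open Classical in
noncomputable def extOne (t : ℕ) (g : A t →ₗ[ℂ] B t) : A (t + 1) →ₗ[ℂ] B (t + 1) :=
  if h : ∃ G : A (t + 1) →ₗ[ℂ] B (t + 1), ∀ (x : A t) (a : A 1),
      G (mulA t 1 x a) = mulB t 1 (g x) (f1 a)
  then h.choose else 0

noncomputable def theta : ∀ n, A n →ₗ[ℂ] B n
  | 0 => 0
  | 1 => f1
  | 2 => f2
  | (n + 3) => extOne mulA mulB f1 (n + 2) (theta (n + 2))

lemma exists_extOne (hBassoc : GradedAssoc B mulB)
    (h52 : Cond52 A mulA) (h53 : Cond53 A mulA)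
    (hf : ∀ x y : A 1, f2 (mulA 1 1 x y) = mulB 1 1 (f1 x) (f1 y))
    (m : ℕ) (hm : 1 ≤ m) (g : A m →ₗ[ℂ] B m) (g' : A (m + 1) →ₗ[ℂ] B (m + 1))
    (hg : ∀ (x : A m) (a : A 1), g' (mulA m 1 x a) = mulB m 1 (g x) (f1 a)) :
    ∃ G : A (m + 2) →ₗ[ℂ] B (m + 2), ∀ (x : A (m + 1)) (a : A 1),
      G (mulA (m + 1) 1 x a) = mulB (m + 1) 1 (g' x) (f1 a) := by
  set N : (A (m + 1) ⊗[ℂ] A 1) →ₗ[ℂ] B (m + 2) :=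
    TensorProduct.lift ((mulB (m + 1) 1).compl₁₂ g' f1) with hN
  have hker : LinearMap.ker (M2 A mulA (m + 1) 1) ≤ LinearMap.ker N := by
    intro u hu
    obtain ⟨w, rfl⟩ := LinearMap.rTensor_surjective (A 1) (h53 m 1 hm le_rfl) u
    have hw : w ∈ LinearMap.ker (M3 A mulA m 1 1) := hu
    rw [h52 m 1 1 hm le_rfl le_rfl, Submodule.mem_sup] at hw
    obtain ⟨w1, hw1, w2, hw2, rfl⟩ := hw
    rw [LinearMap.mem_ker, map_add, map_add]
    have e1 : N (LinearMap.rTensor (A 1) (M2 A mulA m 1) w1) = 0 := by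
      obtain ⟨v, rfl⟩ := hw1
      have hcomp : (LinearMap.rTensor (A 1) (M2 A mulA m 1)).comp
          (TensorProduct.mapIncl (LinearMap.ker (M2 A mulA m 1))
            (⊤ : Submodule ℂ (A 1))) = 0 := by
        apply TensorProduct.ext'
        rintro ⟨x, hx⟩ ⟨y, -⟩
        simp only [LinearMap.comp_apply, TensorProduct.mapIncl, TensorProduct.map_tmul,
          Submodule.coe_subtype, LinearMap.rTensor_tmul, LinearMap.zero_apply]
        rw [LinearMap.mem_ker.mp hx, TensorProduct.zero_tmul]
      have := DFunLike.congr_fun hcomp v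
      simp only [LinearMap.comp_apply, LinearMap.zero_apply] at this
      rw [this, map_zero]
    have e2 : N (LinearMap.rTensor (A 1) (M2 A mulA m 1) w2) = 0 := by
      obtain ⟨z, ⟨v, rfl⟩, rfl⟩ := hw2
      set G : (A m ⊗[ℂ] A 2) →ₗ[ℂ] B (m + 2) :=
        TensorProduct.lift ((mulB m 2).compl₁₂ g f2) with hG
      have hcomm : ((N.comp (LinearMap.rTensor (A 1) (M2 A mulA m 1))).comp
          (TensorProduct.assoc ℂ (A m) (A 1) (A 1)).symm.toLinearMap) =
          G.comp (LinearMap.lTensor (A m) (M2 A mulA 1 1)) := by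
        apply TensorProduct.ext'
        intro x u
        induction u with
        | zero => simp
        | add u v hu hv => simp only [TensorProduct.tmul_add, map_add, hu, hv]
        | tmul b a =>
          simp only [LinearMap.comp_apply, LinearEquiv.coe_coe, TensorProduct.assoc_symm_tmul,
            LinearMap.rTensor_tmul, LinearMap.lTensor_tmul]
          have hM2 : M2 A mulA m 1 (x ⊗ₜ[ℂ] b) = mulA m 1 x b := rfl
          have hM2' : M2 A mulA 1 1 (b ⊗ₜ[ℂ] a) = mulA 1 1 b a := rfl
          rw [hM2, hM2', hN, hG]
          simp only [TensorProduct.lift.tmul, LinearMap.compl₁₂_apply]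
          rw [hg, hf]
          exact eq_of_heq (hBassoc m 1 1 (g x) (f1 b) (f1 a))
      have hcomp : (LinearMap.lTensor (A m) (M2 A mulA 1 1)).comp
          (TensorProduct.mapIncl (⊤ : Submodule ℂ (A m))
            (LinearMap.ker (M2 A mulA 1 1))) = 0 := by
        apply TensorProduct.ext'
        rintro ⟨x, -⟩ ⟨y, hy⟩
        simp only [LinearMap.comp_apply, TensorProduct.mapIncl, TensorProduct.map_tmul,
          Submodule.coe_subtype, LinearMap.lTensor_tmul, LinearMap.zero_apply]
        rw [LinearMap.mem_ker.mp hy, TensorProduct.tmul_zero]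
      have h1 := DFunLike.congr_fun hcomm (TensorProduct.mapIncl (⊤ : Submodule ℂ (A m))
          (LinearMap.ker (M2 A mulA 1 1)) v)
      have h2 := DFunLike.congr_fun hcomp v
      simp only [LinearMap.comp_apply, LinearEquiv.coe_coe, LinearMap.zero_apply] at h1 h2
      simp only [LinearEquiv.coe_coe]
      rw [h1, h2, map_zero]
    rw [e1, e2, add_zero]
  set e := LinearMap.quotKerEquivOfSurjective (M2 A mulA (m + 1) 1)
    (h53 (m + 1) 1 (Nat.le_add_left 1 m) le_rfl) with he
  refine ⟨((LinearMap.ker (M2 A mulA (m + 1) 1)).liftQ N hker).comp e.symm.toLinearMap, ?_⟩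
  intro x a
  have hx : mulA (m + 1) 1 x a = M2 A mulA (m + 1) 1 (x ⊗ₜ[ℂ] a) := rfl
  have hsymm : e.symm (M2 A mulA (m + 1) 1 (x ⊗ₜ[ℂ] a)) =
      Submodule.Quotient.mk (x ⊗ₜ[ℂ] a) := by
    rw [LinearEquiv.symm_apply_eq, he]
    rfl
  rw [hx, LinearMap.comp_apply, LinearEquiv.coe_coe, hsymm, Submodule.liftQ_apply, hN]
  simp [TensorProduct.lift.tmul]

lemma theta_prop1 (hBassoc : GradedAssoc B mulB)
    (h52 : Cond52 A mulA) (h53 : Cond53 A mulA)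
    (hf : ∀ x y : A 1, f2 (mulA 1 1 x y) = mulB 1 1 (f1 x) (f1 y)) :
    ∀ t, 1 ≤ t → ∀ (x : A t) (a : A 1),
      theta mulA mulB f1 f2 (t + 1) (mulA t 1 x a)
        = mulB t 1 (theta mulA mulB f1 f2 t x) (f1 a) := by
  intro t ht
  induction t, ht using Nat.le_induction with
  | base => intro x a; exact hf x a
  | succ m hm IH =>
    obtain ⟨k, rfl⟩ : ∃ k, m = k + 1 := ⟨m - 1, by omega⟩
    have hex := exists_extOne mulA mulB f1 f2 hBassoc h52 h53 hf (k + 1)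
      (Nat.le_add_left 1 k) (theta mulA mulB f1 f2 (k + 1)) (theta mulA mulB f1 f2 (k + 2)) IH
    intro x a
    show extOne mulA mulB f1 (k + 2) (theta mulA mulB f1 f2 (k + 2)) (mulA (k + 2) 1 x a) = _
    rw [extOne, dif_pos hex]
    exact hex.choose_spec x a

lemma theta_mul (hAassoc : GradedAssoc A mulA) (hBassoc : GradedAssoc B mulB)
    (h52 : Cond52 A mulA) (h53 : Cond53 A mulA)
    (hf : ∀ x y : A 1, f2 (mulA 1 1 x y) = mulB 1 1 (f1 x) (f1 y)) :
    ∀ t, 1 ≤ t → ∀ s, 1 ≤ s → ∀ (x : A s) (y : A t),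
      theta mulA mulB f1 f2 (s + t) (mulA s t x y)
        = mulB s t (theta mulA mulB f1 f2 s x) (theta mulA mulB f1 f2 t y) := by
  intro t ht
  induction t, ht using Nat.le_induction with
  | base => intro s hs x a; exact theta_prop1 mulA mulB f1 f2 hBassoc h52 h53 hf s hs x a
  | succ m hm IH =>
    intro s hs x y
    obtain ⟨u, rfl⟩ := h53 m 1 hm le_rfl y
    induction u with
    | zero => simp
    | add u v hu hv => simp only [map_add, hu, hv]
    | tmul b a =>
      have hM2 : M2 A mulA m 1 (b ⊗ₜ[ℂ] a) = mulA m 1 b a := rfl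
      rw [hM2]
      have h1 : mulA (s + m) 1 (mulA s m x b) a = mulA s (m + 1) x (mulA m 1 b a) :=
        eq_of_heq (hAassoc s m 1 x b a)
      have key : theta mulA mulB f1 f2 (s + m + 1) (mulA s (m + 1) x (mulA m 1 b a))
          = mulB s (m + 1) (theta mulA mulB f1 f2 s x)
            (theta mulA mulB f1 f2 (m + 1) (mulA m 1 b a)) := by
        rw [← h1, theta_prop1 mulA mulB f1 f2 hBassoc h52 h53 hf (s + m) (by omega),
          IH s hs x b, theta_prop1 mulA mulB f1 f2 hBassoc h52 h53 hf m hm b a]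
        exact eq_of_heq
          (hBassoc s m 1 (theta mulA mulB f1 f2 s x) (theta mulA mulB f1 f2 m b) (f1 a))
      exact key

end Aux


theorem stmt_12 (A : ℕ → Type*) [∀ t, AddCommGroup (A t)] [∀ t, Module ℂ (A t)]
    (mulA : ∀ s t : ℕ, A s →ₗ[ℂ] A t →ₗ[ℂ] A (s + t)) (hAassoc : GradedAssoc A mulA)
    (B : ℕ → Type*) [∀ t, AddCommGroup (B t)] [∀ t, Module ℂ (B t)]
    (mulB : ∀ s t : ℕ, B s →ₗ[ℂ] B t →ₗ[ℂ] B (s + t)) (hBassoc : GradedAssoc B mulB)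
    (h52 : Cond52 A mulA) (h53 : Cond53 A mulA)
    (f1 : A 1 →ₗ[ℂ] B 1) (f2 : A 2 →ₗ[ℂ] B 2)
    (hf : ∀ x y : A 1, f2 (mulA 1 1 x y) = mulB 1 1 (f1 x) (f1 y)) :
    ∃ θ : ∀ t, A t →ₗ[ℂ] B t,
      (θ 1 = f1 ∧ θ 2 = f2 ∧
        ∀ s t : ℕ, 1 ≤ s → 1 ≤ t → ∀ (x : A s) (y : A t),
          θ (s + t) (mulA s t x y) = mulB s t (θ s x) (θ t y)) ∧
      ∀ θ' : ∀ t, A t →ₗ[ℂ] B t,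
        (θ' 1 = f1 ∧ θ' 2 = f2 ∧
          ∀ s t : ℕ, 1 ≤ s → 1 ≤ t → ∀ (x : A s) (y : A t),
            θ' (s + t) (mulA s t x y) = mulB s t (θ' s x) (θ' t y)) →
        ∀ t : ℕ, 1 ≤ t → θ' t = θ t := by
  refine ⟨theta mulA mulB f1 f2, ⟨rfl, rfl, ?_⟩, ?_⟩
  · intro s t hs ht x y
    exact theta_mul mulA mulB f1 f2 hAassoc hBassoc h52 h53 hf t ht s hs x y
  · rintro θ' ⟨h1, h2, hmul⟩ t ht
    induction t, ht using Nat.le_induction with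
    | base => exact h1
    | succ m hm IH =>
      apply LinearMap.ext
      intro z
      obtain ⟨u, rfl⟩ := h53 m 1 hm le_rfl z
      induction u with
      | zero => simp
      | add u v hu hv => simp only [map_add, hu, hv]
      | tmul x a =>
        have hM2 : M2 A mulA m 1 (x ⊗ₜ[ℂ] a) = mulA m 1 x a := rfl
        rw [hM2, hmul m 1 hm le_rfl x a,
          theta_prop1 mulA mulB f1 f2 hBassoc h52 h53 hf m hm x a, IH, h1]
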